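/- arXiv:1709.00607 — 5 statements merged into one kernel-verified Lean document; each statement's English description precedes it below -/
import Mathlib

section
/- Suppose m ≡ 2 (mod 4), j ∈ J, and 1 ≤ k ≤ n − 1. Let β = m − 2^n·j_1 − 2^(n−1)·j_2 − ⋯ − 2^(n−k+2)·j_(k−1) and B = ∏_{p=0}^{j_k − 1} (β − p·2^(n−k+1)) (an empty product being 1). Then B ≠ 0 and ν(B) = j_k. -/
open Finset

/-- `s a` is the sum of the binary digits of `a`. -/
def sdig (a : ℕ) : ℕ := (Nat.digits 2 a).sum

/-- `carries a b` is the number of carries when adding `a` and `b` in base 2: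
`c(a,b) = s(a) + s(b) - s(a+b)`. -/
def carries (a b : ℕ) : ℕ := sdig a + sdig b - sdig (a + b)

/-- The generalized binomial coefficient `C_r(x) = x(x-1)⋯(x-r+1)/r!` (with `C_0(x) = 1`). -/
def genBinom (x : ℚ) (r : ℕ) : ℚ :=
  (∏ p ∈ Finset.range r, (x - p)) / (Nat.factorial r : ℚ)

/-- Membership in the index set `J`: here `j i` (for `i : Fin n`) is the paper's
`j_{i+1}`, so the defining relation `(2^n-1)j_1 + ⋯ + (2-1)j_n = m+1` becomes
`∑ k, (2^(n-k) - 1) * j k = m + 1`. -/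
def inJ (n m : ℕ) (j : Fin n → ℕ) : Prop :=
  ∑ k : Fin n, (2 ^ (n - (k : ℕ)) - 1) * j k = m + 1

/-- `α_j(k)`: for `K : Fin n`, `alphaF n m j K` is the paper's `α_j(K+1)`, i.e.
`m / 2^(n-K) - ∑_{I < K} 2^(K-I) j_{I+1}`. -/
def alphaF (n m : ℕ) (j : Fin n → ℕ) (K : Fin n) : ℚ :=
  (m : ℚ) / 2 ^ (n - (K : ℕ)) -
    ∑ I : Fin n, if (I : ℕ) < (K : ℕ) then 2 ^ ((K : ℕ) - (I : ℕ)) * (j I : ℚ) else 0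

/-- `P(j) = ∏_{k=1}^n C_{j_k}(α_j(k))`. -/
def Pprod (n m : ℕ) (j : Fin n → ℕ) : ℚ :=
  ∏ k : Fin n, genBinom (alphaF n m j k) (j k)

/-- `V(j) = -ν(P(j))`, where `ν` is the 2-adic valuation on `ℚ`. -/
def V (n m : ℕ) (j : Fin n → ℕ) : ℤ := - padicValRat 2 (Pprod n m j)

/-- `β_j(k)`: for `K : Fin n`, `betaF n m j K` is the paper's
`β_j(K+1) = m - 2^n j_1 - ⋯ - 2^(n-K+1) j_K = m - ∑_{I < K} 2^(n-I) j_{I+1}`. -/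
def betaF (n m : ℕ) (j : Fin n → ℕ) (K : Fin n) : ℤ :=
  (m : ℤ) - ∑ I : Fin n, if (I : ℕ) < (K : ℕ) then 2 ^ (n - (I : ℕ)) * (j I : ℤ) else 0

lemma val_of_mod4 (z : ℤ) (hz : z % 4 = 2) : z ≠ 0 ∧ padicValInt 2 z = 1 := by
  obtain ⟨t, ht, ht2⟩ : ∃ t : ℤ, z = 2 * t ∧ t % 2 = 1 := ⟨z / 2, by omega, by omega⟩
  have ht0 : t ≠ 0 := by omega
  refine ⟨by omega, ?_⟩
  have h2 : padicValInt 2 t = 0 := by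
    unfold padicValInt
    rw [padicValNat.eq_zero_iff]
    right; right
    intro hd
    have : (2:ℤ) ∣ t := by
      have := Int.natAbs_dvd_natAbs.mp (show (2:ℤ).natAbs ∣ t.natAbs from hd)
      omega
    omega
  rw [ht, padicValInt.mul (by norm_num) ht0, h2]
  norm_num [padicValInt]

lemma prod_val (f : ℕ → ℤ) (hf : ∀ p, f p % 4 = 2) (r : ℕ) :
    (∏ p ∈ Finset.range r, f p) ≠ 0 ∧ padicValInt 2 (∏ p ∈ Finset.range r, f p) = r := by
  induction r with
  | zero => simp [padicValInt]
  | succ r ih =>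
    obtain ⟨h1, h2⟩ := val_of_mod4 (f r) (hf r)
    rw [Finset.prod_range_succ]
    exact ⟨mul_ne_zero ih.1 h1, by rw [padicValInt.mul ih.1 h1, ih.2, h2]⟩

/-- For `m ≡ 2 mod 4`, `j ∈ J`, `1 ≤ k ≤ n-1` (here `K : Fin n` is the paper's
`k-1`), the product `B = ∏_{p=0}^{j_k - 1} (β_j(k) - p·2^(n-k+1))` is nonzero
and `ν(B) = j_k`. -/
theorem stmt3 (n m : ℕ) (hn : 3 ≤ n) (hm : 1 ≤ m) (hmn : m ≤ 2 ^ (n + 1) - 3)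
    (h4 : m % 4 = 2)
    (j : Fin n → ℕ) (hj : inJ n m j)
    (K : Fin n) (hK : (K : ℕ) < n - 1) :
    (∏ p ∈ Finset.range (j K), (betaF n m j K - (p : ℤ) * 2 ^ (n - (K : ℕ)))) ≠ 0 ∧
      padicValInt 2
          (∏ p ∈ Finset.range (j K), (betaF n m j K - (p : ℤ) * 2 ^ (n - (K : ℕ)))) =
        j K := by
  have hm4 : (m : ℤ) % 4 = 2 := by omega
  have hS : (4:ℤ) ∣ ∑ I : Fin n, (if (I : ℕ) < (K : ℕ) then 2 ^ (n - (I : ℕ)) * (j I : ℤ) else 0) := by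
    apply Finset.dvd_sum
    intro I _
    split
    · next h =>
      apply dvd_mul_of_dvd_left
      have : (2:ℤ) ^ 2 ∣ 2 ^ (n - (I : ℕ)) := pow_dvd_pow 2 (by omega)
      simpa using this
    · exact dvd_zero 4
  have hP : (4:ℤ) ∣ 2 ^ (n - (K : ℕ)) := by
    have : (2:ℤ) ^ 2 ∣ 2 ^ (n - (K : ℕ)) := pow_dvd_pow 2 (by omega)
    simpa using this
  have hfac : ∀ p : ℕ, (betaF n m j K - (p : ℤ) * 2 ^ (n - (K : ℕ))) % 4 = 2 := by
    intro p
    have hx : (4:ℤ) ∣ (p : ℤ) * 2 ^ (n - (K : ℕ)) := Dvd.dvd.mul_left hP _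
    obtain ⟨s, hs⟩ := hS
    obtain ⟨c, hc⟩ := hx
    unfold betaF
    rw [hs, hc]
    omega
  exact prod_val _ hfac (j K)
end

section
/- Suppose m ≡ 2 (mod 4), j ∈ J, and 1 ≤ k ≤ n − 1. Then C_{j_k}(α_j(k)) ≠ 0 and −ν(C_{j_k}(α_j(k))) = (n − k + 1)·j_k − s(j_k). -/
open Finset

lemma val_two_mod_four {A : ℤ} (h : A % 4 = 2) : padicValRat 2 (A : ℚ) = 1 := by
  obtain ⟨B, hB⟩ : ∃ B : ℤ, A = 2 * B := ⟨A / 2, by omega⟩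
  have hBodd : B % 2 = 1 := by omega
  have hB0 : B ≠ 0 := by omega
  have : (A : ℚ) = 2 * (B : ℚ) := by push_cast [hB]; ring
  rw [this, padicValRat.mul (by norm_num) (by exact_mod_cast hB0),
    show (2:ℚ) = ((2:ℕ):ℚ) by norm_num, padicValRat.of_nat, padicValNat.self (by norm_num)]
  have : padicValRat 2 (B : ℚ) = padicValInt 2 B := padicValRat.of_int
  rw [this]
  have : padicValNat 2 B.natAbs = 0 := by
    apply padicValNat.eq_zero_of_not_dvd
    omega
  simp [padicValInt, this]

lemma padicValRat_prod {ι : Type*} (s : Finset ι) (f : ι → ℚ)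
    (hf : ∀ i ∈ s, f i ≠ 0) :
    padicValRat 2 (∏ i ∈ s, f i) = ∑ i ∈ s, padicValRat 2 (f i) := by
  classical
  induction s using Finset.cons_induction with
  | empty => simp
  | cons a s ha ih =>
    rw [Finset.prod_cons, Finset.sum_cons,
      padicValRat.mul (hf a (Finset.mem_cons_self a s))
        (Finset.prod_ne_zero_iff.mpr fun i hi => hf i (Finset.mem_cons_of_mem hi)),
      ih fun i hi => hf i (Finset.mem_cons_of_mem hi)]

lemma val_factorial (r : ℕ) : (padicValNat 2 (Nat.factorial r) : ℤ) = (r : ℤ) - sdig r := by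
  have h := sub_one_mul_padicValNat_factorial (p := 2) r
  have hle := Nat.digit_sum_le 2 r
  simp only [show (2:ℕ) - 1 = 1 from rfl, one_mul] at h
  rw [h]
  unfold sdig
  omega

/-- For `m ≡ 2 mod 4`, `j ∈ J`, `1 ≤ k ≤ n-1` (here `K : Fin n` is the paper's
`k-1`), we have `C_{j_k}(α_j(k)) ≠ 0` and
`-ν(C_{j_k}(α_j(k))) = (n-k+1) j_k - s(j_k)`. -/
theorem stmt4 (n m : ℕ) (hn : 3 ≤ n) (hm : 1 ≤ m) (hmn : m ≤ 2 ^ (n + 1) - 3)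
    (h4 : m % 4 = 2)
    (j : Fin n → ℕ) (hj : inJ n m j)
    (K : Fin n) (hK : (K : ℕ) < n - 1) :
    genBinom (alphaF n m j K) (j K) ≠ 0 ∧
      -padicValRat 2 (genBinom (alphaF n m j K) (j K)) =
        ((n : ℤ) - (K : ℕ)) * j K - sdig (j K) := by
  set d : ℕ := n - (K : ℕ) with hd
  have hd2 : 2 ≤ d := by omega
  set r : ℕ := j K with hr
  set N : ℕ := ∑ I : Fin n, if (I : ℕ) < (K : ℕ) then 2 ^ ((K : ℕ) - (I : ℕ)) * j I else 0
    with hN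
  have hNsum : ((N : ℕ) : ℚ)
      = ∑ I : Fin n, if (I : ℕ) < (K : ℕ) then 2 ^ ((K : ℕ) - (I : ℕ)) * (j I : ℚ) else 0 := by
    rw [hN]
    push_cast [apply_ite (Nat.cast : ℕ → ℚ)]
    rfl
  have halpha : alphaF n m j K = (m : ℚ) / 2 ^ d - N := by
    rw [alphaF, hNsum, hd]
  set A : ℕ → ℤ := fun p => (m : ℤ) - 2 ^ d * (N + p) with hA
  have h4dvd : (4 : ℤ) ∣ 2 ^ d := ⟨2 ^ (d - 2), by
    rw [show (4 : ℤ) = 2 ^ 2 by norm_num, ← pow_add]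
    congr 1
    omega⟩
  have hA4 : ∀ p : ℕ, A p % 4 = 2 := by
    intro p
    have hdvd : (4 : ℤ) ∣ 2 ^ d * ((N : ℤ) + p) := Dvd.dvd.mul_right h4dvd _
    simp only [hA]
    omega
  have h2d : (2 : ℚ) ^ d ≠ 0 := by positivity
  have hfac : ∀ p : ℕ, alphaF n m j K - p = (A p : ℚ) / 2 ^ d := by
    intro p
    rw [halpha, hA]
    field_simp
    push_cast
    ring
  have hA0 : ∀ p : ℕ, (A p : ℚ) ≠ 0 := by
    intro p
    have := hA4 p
    exact_mod_cast (by omega : A p ≠ 0)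
  have hne : ∀ p ∈ Finset.range r, alphaF n m j K - p ≠ 0 := by
    intro p _
    rw [hfac]
    exact div_ne_zero (hA0 p) h2d
  have hprodne : (∏ p ∈ Finset.range r, (alphaF n m j K - p)) ≠ 0 :=
    Finset.prod_ne_zero_iff.mpr hne
  have hfactne : ((Nat.factorial r : ℕ) : ℚ) ≠ 0 := by
    exact_mod_cast (Nat.factorial_pos r).ne'
  constructor
  · exact div_ne_zero hprodne hfactne
  · have hval2d : padicValRat 2 ((2 : ℚ) ^ d) = d := by
      rw [show (2 : ℚ) ^ d = ((2 ^ d : ℕ) : ℚ) by push_cast; ring, padicValRat.of_nat,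
        padicValNat.prime_pow]
    have hvfac : ∀ p ∈ Finset.range r, padicValRat 2 (alphaF n m j K - p) = 1 - d := by
      intro p _
      rw [hfac p, padicValRat.div (hA0 p) h2d, val_two_mod_four (hA4 p), hval2d]
    rw [genBinom, padicValRat.div hprodne hfactne, padicValRat_prod _ _ hne,
      Finset.sum_congr rfl hvfac, Finset.sum_const, Finset.card_range, nsmul_eq_mul,
      padicValRat.of_nat, val_factorial]
    have hcast : ((d : ℕ) : ℤ) = (n : ℤ) - (K : ℕ) := by
      have : (K : ℕ) < n := K.isLt
      omega
    rw [← hcast]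
    ring
end

section
/- Let a be an integer and r a nonnegative integer, and let C_r(a) = a(a−1)(a−2)⋯(a−r+1)/r! be the generalized binomial coefficient (C_0(a) = 1). Then: (i) if a < 0, then C_r(a) ≠ 0 and the 2-adic valuation of C_r(a) equals c(r, −a−1); (ii) if 0 ≤ a < r, then C_r(a) = 0; (iii) if a ≥ r, then C_r(a) ≠ 0 and the 2-adic valuation of C_r(a) equals c(r, a − r). -/
open Finset

lemma prod_range_sub_eq (x : ℚ) (r : ℕ) :
    ∏ p ∈ Finset.range r, (x - p) = (descPochhammer ℚ r).eval x := by
  induction r with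
  | zero => simp
  | succ n ih => rw [Finset.prod_range_succ, ih, descPochhammer_succ_eval]

lemma genBinom_nat (n r : ℕ) : genBinom (n : ℚ) r = (n.choose r : ℚ) := by
  rw [genBinom, prod_range_sub_eq, descPochhammer_eval_eq_descFactorial,
    Nat.descFactorial_eq_factorial_mul_choose]
  push_cast
  rw [mul_div_cancel_left₀]
  exact_mod_cast Nat.factorial_ne_zero r

lemma genBinom_neg (b r : ℕ) :
    genBinom (-(b + 1 : ℕ) : ℚ) r = (-1) ^ r * ((b + r).choose r : ℚ) := by
  have hfac : (Nat.factorial r : ℚ) ≠ 0 := by exact_mod_cast Nat.factorial_ne_zero r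
  have h := ascPochhammer_eval_neg_eq_descPochhammer ℚ (-((b + 1 : ℕ) : ℚ)) r
  rw [neg_neg] at h
  have h2 : ((ascPochhammer ℚ r).eval ((b + 1 : ℕ) : ℚ)) = ((b + 1).ascFactorial r : ℚ) :=
    (Nat.cast_ascFactorial ℚ _ _).symm
  rw [h2, Nat.ascFactorial_eq_factorial_mul_choose] at h
  rw [genBinom, prod_range_sub_eq]
  have hd : (descPochhammer ℚ r).eval (-((b + 1 : ℕ) : ℚ)) =
      (-1) ^ r * ((Nat.factorial r : ℚ) * ((b + r).choose r : ℚ)) := by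
    have hpow : ((-1 : ℚ)) ^ r * (-1) ^ r = 1 := by
      rw [← pow_add, Even.neg_one_pow ⟨r, by ring⟩]
    calc (descPochhammer ℚ r).eval (-((b + 1 : ℕ) : ℚ))
        = ((-1) ^ r * (-1) ^ r) * (descPochhammer ℚ r).eval (-((b + 1 : ℕ) : ℚ)) := by
          rw [hpow, one_mul]
      _ = (-1) ^ r * ((-1) ^ r * (descPochhammer ℚ r).eval (-((b + 1 : ℕ) : ℚ))) := by ring
      _ = (-1) ^ r * ((Nat.factorial r * (b + r).choose r : ℕ) : ℚ) := by rw [← h]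
      _ = _ := by push_cast; ring
  rw [hd, mul_div_assoc, mul_div_cancel_left₀ _ hfac]

lemma padicVal_choose_eq_carries (b r : ℕ) :
    padicValNat 2 ((b + r).choose r) = carries r b := by
  have := @sub_one_mul_padicValNat_choose_eq_sub_sum_digits' 2 r b ⟨Nat.prime_two⟩
  simpa [carries, sdig, Nat.add_comm b r] using this

/-- For an integer `a` and `r : ℕ`: (i) if `a < 0` then `C_r(a) ≠ 0` and
`ν(C_r(a)) = c(r, -a-1)`; (ii) if `0 ≤ a < r` then `C_r(a) = 0`; (iii) if
`a ≥ r` then `C_r(a) ≠ 0` and `ν(C_r(a)) = c(r, a-r)`. -/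
theorem stmt6 (a : ℤ) (r : ℕ) :
    (a < 0 → genBinom (a : ℚ) r ≠ 0 ∧
        padicValRat 2 (genBinom (a : ℚ) r) = carries r (-a - 1).toNat) ∧
    (0 ≤ a → a < r → genBinom (a : ℚ) r = 0) ∧
    ((r : ℤ) ≤ a → genBinom (a : ℚ) r ≠ 0 ∧
        padicValRat 2 (genBinom (a : ℚ) r) = carries r (a - r).toNat) := by
  
  refine ⟨?_, ?_, ?_⟩
  · intro ha
    set b := (-a - 1).toNat with hb
    have hab : (a : ℚ) = (-(b + 1 : ℕ) : ℚ) := by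
      have : a = -((b : ℤ) + 1) := by omega
      rw [this]; push_cast; ring
    have hpos : 0 < (b + r).choose r := Nat.choose_pos (Nat.le_add_left r b)
    have hne : ((b + r).choose r : ℚ) ≠ 0 := by exact_mod_cast hpos.ne'
    rw [hab, genBinom_neg]
    constructor
    · intro h
      rcases mul_eq_zero.1 h with h | h
      · exact (pow_ne_zero r (by norm_num : (-1 : ℚ) ≠ 0)) h
      · exact hne h
    · rcases Nat.even_or_odd r with he | ho
      · rw [he.neg_one_pow, one_mul, ← padicValRat_of_nat, padicVal_choose_eq_carries]
      · rw [ho.neg_one_pow, neg_one_mul, padicValRat.neg, ← padicValRat_of_nat,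
          padicVal_choose_eq_carries]
  · intro h0 hr
    have : (a : ℚ) = (a.toNat : ℚ) := by exact_mod_cast (Int.toNat_of_nonneg h0).symm
    rw [this, genBinom_nat, Nat.choose_eq_zero_of_lt (by omega), Nat.cast_zero]
  · intro hr
    set b := (a - r).toNat with hb
    have hab : (a : ℚ) = ((b + r : ℕ) : ℚ) := by
      have : a = (b : ℤ) + r := by omega
      rw [this]; push_cast; ring
    have hpos : 0 < (b + r).choose r := Nat.choose_pos (Nat.le_add_left r b)
    rw [hab, genBinom_nat]
    refine ⟨by exact_mod_cast hpos.ne', ?_⟩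
    rw [← padicValRat_of_nat, padicVal_choose_eq_carries]
end

section
/- Suppose m ≡ 2 (mod 4) and j ∈ J. Then α_j(n) is an integer, C_{j_k}(α_j(k)) ≠ 0 for all 1 ≤ k ≤ n − 1, and: (i) if α_j(n) < 0 then P(j) ≠ 0 and V(j) = v(j) − c(j_n, −α_j(n) − 1); (ii) if 0 ≤ α_j(n) < j_n then P(j) = 0; (iii) if α_j(n) ≥ j_n then P(j) ≠ 0 and V(j) = v(j) − c(j_n, α_j(n) − j_n). -/
open Finset

/-- `v(j) = ∑_{k=1}^{n-1} ((n-k+1) j_k - s(j_k))` (the case `ν(m) = 1`). -/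
def vsum (n : ℕ) (j : Fin n → ℕ) : ℤ :=
  ∑ k : Fin n, if (k : ℕ) < n - 1 then ((n : ℤ) - (k : ℕ)) * j k - sdig (j k) else 0

/-! Write `m = 2m'` with `m'` odd. For `k < n`, `α_j(k) - p = (m' - 2^(n-k) (N + p)) / 2^(n-k)`
with `N` an integer, so each of the `j_k` factors of the numerator of `C_{j_k}(α_j(k))` has
valuation `-(n-k)`; together with Legendre's `ν(r!) = r - s(r)` this makes the first `n - 1`
factors of `P(j)` contribute exactly `-v(j)`. The last argument `α_j(n) = m' - N` is an integer
`z`, and `C_{j_n}(z)` is, up to sign, the ordinary binomial coefficient `(z choose j_n)` or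
`(-z-1+j_n choose j_n)`, whose valuation is a carry count by Kummer's theorem. -/

theorem padicValRat_finset_prod {p : ℕ} [Fact p.Prime] {ι : Type*} {s : Finset ι} {f : ι → ℚ}
    (hf : ∀ i ∈ s, f i ≠ 0) : padicValRat p (∏ i ∈ s, f i) = ∑ i ∈ s, padicValRat p (f i) := by
  induction s using Finset.cons_induction with
  | empty => simp
  | cons a s ha ih =>
    rw [prod_cons, sum_cons, padicValRat.mul (hf a (mem_cons_self a s))
        (prod_ne_zero_iff.2 fun i hi => hf i (mem_cons_of_mem hi)),
      ih fun i hi => hf i (mem_cons_of_mem hi)]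

theorem padicValRat_two_odd_div_two_pow {q : ℤ} (hq : Odd q) (e : ℕ) :
    padicValRat 2 ((q : ℚ) / 2 ^ e) = -e := by
  have hq0 : (q : ℚ) ≠ 0 := Int.cast_ne_zero.2 (by rintro rfl; simp at hq)
  have h2 : padicValRat 2 2 = 1 := by simpa using padicValRat.self (p := 2) one_lt_two
  rw [padicValRat.div hq0 (by positivity), padicValRat.of_int,
    padicValInt.eq_zero_of_not_dvd (by simpa [← even_iff_two_dvd] using hq)]
  simp [h2]

theorem padicValRat_two_factorial (r : ℕ) :
    padicValRat 2 r.factorial = (r : ℤ) - sdig r := by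
  have h := sub_one_mul_padicValNat_factorial (p := 2) r
  have hle : sdig r ≤ r := Nat.digit_sum_le 2 r
  rw [padicValRat.of_nat]
  simp only [sdig] at *
  omega

theorem padicValNat_two_add_choose (a r : ℕ) :
    padicValNat 2 ((a + r).choose r) = carries r a := by
  simpa [carries, sdig, add_comm r a] using
    sub_one_mul_padicValNat_choose_eq_sub_sum_digits' (p := 2) (k := r) (n := a)

theorem genBinom_eq_ringChoose (x : ℚ) (r : ℕ) : genBinom x r = Ring.choose x r := by
  rw [Ring.choose_eq_smul, genBinom, ← descPochhammer_eval_eq_prod_range, smul_eq_mul,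
    div_eq_inv_mul, ← Polynomial.aeval_eq_smeval, ← descPochhammer_map (algebraMap ℤ ℚ),
    Polynomial.eval_map, Polynomial.aeval_def]

theorem genBinom_natCast (a r : ℕ) : genBinom a r = a.choose r := by
  rw [genBinom_eq_ringChoose, Ring.choose_natCast]

theorem genBinom_neg_natCast_sub_one (a r : ℕ) :
    genBinom (-a - 1) r = (-1) ^ r * (a + r).choose r := by
  rw [genBinom_eq_ringChoose, neg_sub_left, Ring.choose_neg,
    show (1 + a + r - 1 : ℚ) = (a + r : ℕ) by push_cast; ring, Ring.choose_natCast,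
    Units.smul_def, zsmul_eq_mul, Int.cast_negOnePow_natCast]

theorem genBinom_odd_div_two_pow {q : ℤ} (hq : Odd q) {e : ℕ} (he : e ≠ 0) (r : ℕ) :
    genBinom (q / 2 ^ e) r ≠ 0 ∧
      padicValRat 2 (genBinom (q / 2 ^ e) r) = sdig r - (e + 1) * r := by
  have hfactor : ∀ p : ℕ, (q : ℚ) / 2 ^ e - p = ((q - 2 ^ e * p : ℤ) : ℚ) / 2 ^ e := by
    intro p; push_cast; field_simp
  have hodd : ∀ p : ℕ, Odd (q - 2 ^ e * p) := fun p =>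
    hq.sub_even ((Int.even_pow.2 ⟨even_two, he⟩).mul_right _)
  have hne : ∀ p ∈ range r, (q : ℚ) / 2 ^ e - p ≠ 0 := fun p _ => by
    have := Int.odd_iff.1 (hodd p)
    rw [hfactor]
    exact div_ne_zero (Int.cast_ne_zero.2 (by omega)) (by positivity)
  have hnum : (∏ p ∈ range r, ((q : ℚ) / 2 ^ e - p)) ≠ 0 := prod_ne_zero_iff.2 hne
  have hfac : (r.factorial : ℚ) ≠ 0 := by exact_mod_cast r.factorial_ne_zero
  refine ⟨div_ne_zero hnum hfac, ?_⟩
  rw [genBinom, padicValRat.div hnum hfac, padicValRat_finset_prod hne, padicValRat_two_factorial]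
  simp only [hfactor, padicValRat_two_odd_div_two_pow (hodd _), sum_const, card_range,
    nsmul_eq_mul]
  ring

theorem genBinom_intCast_of_neg {z : ℤ} (hz : z < 0) (r : ℕ) :
    genBinom z r ≠ 0 ∧ padicValRat 2 (genBinom z r) = carries r (-z - 1).toNat := by
  have hcast : (z : ℚ) = -((-z - 1).toNat : ℕ) - 1 := by
    have h : z = -(((-z - 1).toNat : ℕ) : ℤ) - 1 := by omega
    nth_rewrite 1 [h]
    push_cast
    rfl
  have hchoose : (((-z - 1).toNat + r).choose r : ℚ) ≠ 0 :=
    Nat.cast_ne_zero.2 (Nat.choose_pos (Nat.le_add_left _ _)).ne'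
  have hsign : ((-1 : ℚ) ^ r) ≠ 0 := pow_ne_zero _ (by norm_num)
  rw [hcast, genBinom_neg_natCast_sub_one]
  refine ⟨mul_ne_zero hsign hchoose, ?_⟩
  rw [padicValRat.mul hsign hchoose, padicValRat.pow, padicValRat.neg,
    padicValRat.one, mul_zero, zero_add, padicValRat.of_nat, padicValNat_two_add_choose]

theorem genBinom_intCast_eq_zero {z : ℤ} {r : ℕ} (hz : 0 ≤ z) (hzr : z < r) :
    genBinom z r = 0 := by
  lift z to ℕ using hz
  rw [Int.cast_natCast, genBinom_natCast, Nat.choose_eq_zero_of_lt (by omega), Nat.cast_zero]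

theorem genBinom_intCast_of_le {z : ℤ} {r : ℕ} (hrz : r ≤ z) :
    genBinom z r ≠ 0 ∧ padicValRat 2 (genBinom z r) = carries r (z - r).toNat := by
  obtain ⟨a, rfl⟩ : ∃ a : ℕ, z = a + r := ⟨(z - r).toNat, by omega⟩
  have hchoose : (((a + r).choose r : ℕ) : ℚ) ≠ 0 :=
    Nat.cast_ne_zero.2 (Nat.choose_pos (Nat.le_add_left _ _)).ne'
  rw [show ((a + r : ℤ) : ℚ) = ((a + r : ℕ) : ℚ) by push_cast; rfl, genBinom_natCast,
    padicValRat.of_nat, padicValNat_two_add_choose, add_sub_cancel_right, Int.toNat_natCast]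
  exact ⟨hchoose, rfl⟩

theorem alphaF_two_mul_eq (n m' : ℕ) (j : Fin n → ℕ) (K : Fin n) :
    ∃ N : ℤ, alphaF n (2 * m') j K = ((m' - 2 ^ (n - 1 - K) * N : ℤ) : ℚ) / 2 ^ (n - 1 - K) := by
  refine ⟨∑ I : Fin n, if (I : ℕ) < K then 2 ^ ((K : ℕ) - I) * (j I : ℤ) else 0, ?_⟩
  have hK : n - (K : ℕ) = n - 1 - K + 1 := by omega
  rw [alphaF, hK, pow_succ]
  push_cast
  field_simp

theorem alphaF_eq_odd_div_two_pow {n m : ℕ} (h4 : m % 4 = 2) (j : Fin n → ℕ) {K : Fin n}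
    (hK : (K : ℕ) < n - 1) : ∃ q : ℤ, Odd q ∧ alphaF n m j K = q / 2 ^ (n - 1 - K) := by
  obtain ⟨m', rfl⟩ : ∃ m', m = 2 * m' := ⟨m / 2, by omega⟩
  obtain ⟨N, hN⟩ := alphaF_two_mul_eq n m' j K
  refine ⟨_, ?_, hN⟩
  have hm' : Odd (m' : ℤ) := by rw [Int.odd_iff]; omega
  exact hm'.sub_even ((Int.even_pow.2 ⟨even_two, by omega⟩).mul_right _)

theorem alphaF_last_eq_intCast {n m : ℕ} (hm : Even m) (j : Fin n → ℕ) (hn : 0 < n) :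
    ∃ z : ℤ, alphaF n m j ⟨n - 1, by omega⟩ = z := by
  obtain ⟨m', rfl⟩ := hm.two_dvd
  obtain ⟨N, hN⟩ := alphaF_two_mul_eq n m' j ⟨n - 1, by omega⟩
  refine ⟨m' - N, ?_⟩
  simp [hN]

theorem genBinom_alphaF_of_lt {n m : ℕ} (h4 : m % 4 = 2) (j : Fin n → ℕ) {K : Fin n}
    (hK : (K : ℕ) < n - 1) :
    genBinom (alphaF n m j K) (j K) ≠ 0 ∧
      padicValRat 2 (genBinom (alphaF n m j K) (j K)) = -(((n : ℤ) - K) * j K - sdig (j K)) := by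
  obtain ⟨q, hq, hα⟩ := alphaF_eq_odd_div_two_pow h4 j hK
  rw [hα]
  refine ⟨(genBinom_odd_div_two_pow hq (by omega) _).1, ?_⟩
  rw [(genBinom_odd_div_two_pow hq (by omega) _).2]
  push_cast [show K.val ≤ n - 1 by omega, show 1 ≤ n by omega]
  ring

theorem padicValRat_prod_erase_last {n m : ℕ} (h4 : m % 4 = 2) (j : Fin n → ℕ) (hn : 0 < n) :
    (∏ k ∈ univ.erase ⟨n - 1, by omega⟩, genBinom (alphaF n m j k) (j k)) ≠ 0 ∧
      padicValRat 2 (∏ k ∈ univ.erase ⟨n - 1, by omega⟩, genBinom (alphaF n m j k) (j k)) =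
        -vsum n j := by
  have hlt : ∀ k ∈ univ.erase (⟨n - 1, by omega⟩ : Fin n), (k : ℕ) < n - 1 := fun k hk => by
    have : (k : ℕ) ≠ n - 1 := fun h => (mem_erase.1 hk).1 (Fin.ext h)
    omega
  refine ⟨prod_ne_zero_iff.2 fun k hk => (genBinom_alphaF_of_lt h4 j (hlt k hk)).1, ?_⟩
  rw [padicValRat_finset_prod fun k hk => (genBinom_alphaF_of_lt h4 j (hlt k hk)).1, vsum,
    ← add_sum_erase _ _ (mem_univ ⟨n - 1, by omega⟩), if_neg (lt_irrefl _), zero_add,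
    ← sum_neg_distrib]
  exact sum_congr rfl fun k hk => by
    rw [(genBinom_alphaF_of_lt h4 j (hlt k hk)).2, if_pos (hlt k hk)]

theorem Pprod_ne_zero_and_V_eq {n m : ℕ} (h4 : m % 4 = 2) (j : Fin n → ℕ) (hn : 0 < n)
    {x : ℚ} {t : ℤ} (hx : alphaF n m j ⟨n - 1, by omega⟩ = x)
    (hne : genBinom x (j ⟨n - 1, by omega⟩) ≠ 0)
    (ht : padicValRat 2 (genBinom x (j ⟨n - 1, by omega⟩)) = t) :
    Pprod n m j ≠ 0 ∧ V n m j = vsum n j - t := by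
  obtain ⟨hrest, hval⟩ := padicValRat_prod_erase_last h4 j hn
  rw [← hx] at hne ht
  rw [V, Pprod, ← mul_prod_erase _ _ (mem_univ ⟨n - 1, by omega⟩),
    padicValRat.mul hne hrest, ht, hval]
  exact ⟨mul_ne_zero hne hrest, by ring⟩

/-- For `m ≡ 2 mod 4` and `j ∈ J`: `α_j(n)` is an integer `z`, all
`C_{j_k}(α_j(k))` with `k ≤ n-1` are nonzero, and: (i) if `z < 0` then
`P(j) ≠ 0` and `V(j) = v(j) - c(j_n, -z-1)`; (ii) if `0 ≤ z < j_n` then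
`P(j) = 0`; (iii) if `z ≥ j_n` then `P(j) ≠ 0` and
`V(j) = v(j) - c(j_n, z - j_n)`. -/
theorem stmt7 (n m : ℕ) (hn : 3 ≤ n)
    (h4 : m % 4 = 2)
    (j : Fin n → ℕ) :
    ∃ z : ℤ, alphaF n m j ⟨n - 1, by omega⟩ = (z : ℚ) ∧
      (∀ K : Fin n, (K : ℕ) < n - 1 → genBinom (alphaF n m j K) (j K) ≠ 0) ∧
      (z < 0 → Pprod n m j ≠ 0 ∧
          V n m j = vsum n j - carries (j ⟨n - 1, by omega⟩) (-z - 1).toNat) ∧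
      (0 ≤ z → z < (j ⟨n - 1, by omega⟩ : ℤ) → Pprod n m j = 0) ∧
      ((j ⟨n - 1, by omega⟩ : ℤ) ≤ z → Pprod n m j ≠ 0 ∧
          V n m j = vsum n j -
            carries (j ⟨n - 1, by omega⟩) (z - (j ⟨n - 1, by omega⟩ : ℤ)).toNat) := by
  have hn0 : 0 < n := by omega
  obtain ⟨z, hz⟩ := alphaF_last_eq_intCast (Nat.even_iff.2 (by omega : m % 2 = 0)) j hn0
  refine ⟨z, hz, fun K hK => (genBinom_alphaF_of_lt h4 j hK).1, fun hneg => ?_,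
    fun hz0 hzr => ?_, fun hle => ?_⟩
  · exact Pprod_ne_zero_and_V_eq h4 j hn0 hz (genBinom_intCast_of_neg hneg _).1
      (genBinom_intCast_of_neg hneg _).2
  · exact prod_eq_zero (mem_univ _) (hz ▸ genBinom_intCast_eq_zero hz0 hzr)
  · exact Pprod_ne_zero_and_V_eq h4 j hn0 hz (genBinom_intCast_of_le hle).1
      (genBinom_intCast_of_le hle).2
end

section
/- Suppose m ≡ 22 (mod 48), and write m = 48q + 22 with q a nonnegative integer. Then j′, j″, j‴ ∈ J, the products P(j′), P(j″), P(j‴) are all nonzero, and V(j′) = V(j″) = V(j‴) = 32q + 10 − s(q) = (2/3)(m−1) − s((2/3)(m−1)) − 1. -/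
open Finset

/-!
Write `n = N + 3`. The three tuples vanish outside their last three coordinates, so
`P(j) = C_x(m/8) · C_y(m/4 - 2x) · C_z(m/2 - 4x - 2y)` for `j = (0, …, 0, x, y, z)`.
For `m = 48q + 22` the middle argument is half an odd integer, and such a binomial
coefficient has 2-adic valuation `s(y) - 2y`: each of the `y` factors of the numerator
contributes `-1` and, by Legendre's formula, `y!` contributes `y - s(y)`. The other two
factors are explicit (odd, twice odd, or odd over 4). As `y - 16q ∈ {7, 6, 5}`, we have
`s(y) = s(q) + s(y - 16q)`, and all three valuations come out as `s(q) - 32q - 10`.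
-/

lemma sdig_two_mul_add {a b : ℕ} (hb : b < 2) : sdig (2 * a + b) = sdig a + b := by
  rcases Nat.eq_zero_or_pos (2 * a + b) with h | h
  · obtain ⟨rfl, rfl⟩ : a = 0 ∧ b = 0 := by omega
    rfl
  · rw [sdig, Nat.digits_def' (by norm_num) h, List.sum_cons,
      show (2 * a + b) % 2 = b by omega, show (2 * a + b) / 2 = a by omega, sdig, add_comm]

lemma sdig_two_pow_mul_add (k q : ℕ) {r : ℕ} (hr : r < 2 ^ k) :
    sdig (2 ^ k * q + r) = sdig q + sdig r := by
  induction k generalizing r with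
  | zero =>
    obtain rfl : r = 0 := by simpa using hr
    simp [sdig]
  | succ k ih =>
    have hr2 : r / 2 < 2 ^ k := by rw [pow_succ] at hr; omega
    calc sdig (2 ^ (k + 1) * q + r) = sdig (2 * (2 ^ k * q + r / 2) + r % 2) := by
          congr 1; rw [pow_succ', mul_assoc]; omega
      _ = sdig q + sdig (2 * (r / 2) + r % 2) := by
          rw [sdig_two_mul_add (Nat.mod_lt _ two_pos), ih hr2,
            sdig_two_mul_add (Nat.mod_lt _ two_pos), add_assoc]
      _ = sdig q + sdig r := by rw [Nat.div_add_mod]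

@[to_additive]
lemma Fin.prod_univ_add_three_of_eq_one {M : Type*} [CommMonoid M] {N : ℕ}
    {f : Fin (N + 3) → M} (hf : ∀ k : Fin (N + 3), (k : ℕ) < N → f k = 1) :
    ∏ k, f k = f (Fin.natAdd N 0) * f (Fin.natAdd N 1) * f (Fin.natAdd N 2) := by
  rw [Fin.prod_univ_add, prod_eq_one fun k _ => hf _ k.is_lt, one_mul, Fin.prod_univ_three]

def lastThree (N x y z : ℕ) (k : Fin (N + 3)) : ℕ :=
  if (k : ℕ) = N then x else if (k : ℕ) = N + 1 then y else if (k : ℕ) = N + 2 then z else 0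

section lastThree

variable {N x y z : ℕ}

lemma lastThree_of_lt {k : Fin (N + 3)} (hk : (k : ℕ) < N) : lastThree N x y z k = 0 := by
  simp only [lastThree]; split_ifs <;> omega

lemma inJ_lastThree {m : ℕ} : inJ (N + 3) m (lastThree N x y z) ↔ 7 * x + 3 * y + z = m + 1 := by
  rw [inJ, Fin.sum_univ_add_three_of_eq_zero fun k hk => by rw [lastThree_of_lt hk, mul_zero]]
  simp [lastThree]

lemma alphaF_lastThree (m : ℕ) (K : Fin (N + 3)) :
    alphaF (N + 3) m (lastThree N x y z) K = (m : ℚ) / 2 ^ (N + 3 - K) -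
      ((if N < K then 2 ^ ((K : ℕ) - N) * (x : ℚ) else 0) +
        (if N + 1 < K then 2 ^ ((K : ℕ) - (N + 1)) * (y : ℚ) else 0) +
        (if N + 2 < K then 2 ^ ((K : ℕ) - (N + 2)) * (z : ℚ) else 0)) := by
  rw [alphaF, Fin.sum_univ_add_three_of_eq_zero fun k hk => by simp [lastThree_of_lt hk]]
  simp [lastThree]

lemma Pprod_lastThree (m : ℕ) :
    Pprod (N + 3) m (lastThree N x y z) =
      genBinom (m / 8) x * genBinom (m / 4 - 2 * x) y * genBinom (m / 2 - 4 * x - 2 * y) z := by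
  rw [Pprod, Fin.prod_univ_add_three_of_eq_one fun k hk => by simp [lastThree_of_lt hk, genBinom]]
  norm_num [alphaF_lastThree, lastThree, sub_sub, Nat.add_sub_add_left]

end lastThree

-- The conjunct `a ≠ 0` makes the valuation additive; on its own `padicValRat 2 0 = 0`.
def HasTwoVal (a : ℚ) (v : ℤ) : Prop := a ≠ 0 ∧ padicValRat 2 a = v

namespace HasTwoVal

variable {a b : ℚ} {u v : ℤ}

lemma mul (ha : HasTwoVal a u) (hb : HasTwoVal b v) : HasTwoVal (a * b) (u + v) :=
  ⟨mul_ne_zero ha.1 hb.1, by rw [padicValRat.mul ha.1 hb.1, ha.2, hb.2]⟩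

lemma div (ha : HasTwoVal a u) (hb : HasTwoVal b v) : HasTwoVal (a / b) (u - v) :=
  ⟨div_ne_zero ha.1 hb.1, by rw [padicValRat.div ha.1 hb.1, ha.2, hb.2]⟩

lemma prod {ι : Type*} {s : Finset ι} {f : ι → ℚ} {w : ι → ℤ}
    (h : ∀ i ∈ s, HasTwoVal (f i) (w i)) : HasTwoVal (∏ i ∈ s, f i) (∑ i ∈ s, w i) := by
  classical
  induction s using Finset.induction_on with
  | empty => exact ⟨one_ne_zero, padicValRat.one⟩
  | insert i s hi ih =>
    rw [prod_insert hi, sum_insert hi]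
    exact (h i (mem_insert_self i s)).mul (ih fun k hk => h k (mem_insert_of_mem hk))

lemma of_odd {n : ℤ} (hn : Odd n) : HasTwoVal n 0 := by
  have h2 : ¬ (2 : ℤ) ∣ n := by rwa [← even_iff_two_dvd, Int.not_even_iff_odd]
  refine ⟨Int.cast_ne_zero.mpr fun h => h2 (h ▸ dvd_zero 2), ?_⟩
  rw [padicValRat.of_int, padicValInt.eq_zero_of_not_dvd h2, Nat.cast_zero]

lemma two_pow (k : ℕ) : HasTwoVal (2 ^ k) k := by
  have h2 : padicValRat 2 2 = 1 := by simpa using padicValRat.self (p := 2) one_lt_two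
  exact ⟨by positivity, by rw [padicValRat.pow, h2, mul_one]⟩

lemma factorial (r : ℕ) : HasTwoVal r.factorial (r - sdig r) := by
  refine ⟨by positivity, ?_⟩
  have h := sub_one_mul_padicValNat_factorial (p := 2) r
  rw [show 2 - 1 = 1 from rfl, one_mul, ← sdig] at h
  rw [padicValRat.of_nat, h, Nat.cast_sub (show sdig r ≤ r from Nat.digit_sum_le 2 r)]

end HasTwoVal

lemma genBinom_zero (x : ℚ) : genBinom x 0 = 1 := by simp [genBinom]

lemma genBinom_one (x : ℚ) : genBinom x 1 = x := by simp [genBinom]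

lemma hasTwoVal_genBinom_half_odd (d : ℤ) (r : ℕ) :
    HasTwoVal (genBinom ((2 * d + 1) / 2) r) (sdig r - 2 * r) := by
  have hfactor : ∀ p ∈ range r, HasTwoVal ((2 * d + 1) / 2 - p) (-1) := fun p _ => by
    have h := (HasTwoVal.of_odd (odd_two_mul_add_one (d - p))).div (HasTwoVal.two_pow 1)
    convert h using 1
    · push_cast; ring
    · norm_num
  convert (HasTwoVal.prod hfactor).div (HasTwoVal.factorial r) using 1
  · rfl
  · simp only [sum_const, card_range, nsmul_eq_mul, mul_neg, mul_one]; ring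

section tuples

variable (N q : ℕ)

lemma hasTwoVal_Pprod_first :
    HasTwoVal (Pprod (N + 3) (48 * q + 22) (lastThree N 0 (16 * q + 7) 2))
      (sdig q - (32 * q + 10)) := by
  have hy := hasTwoVal_genBinom_half_odd (12 * q + 5) (16 * q + 7)
  have hz := (HasTwoVal.two_pow 1).mul
    (HasTwoVal.of_odd ((odd_two_mul_add_one (4 * q + 1 : ℤ)).mul (odd_two_mul_add_one (q : ℤ))))
  have hs : sdig (16 * q + 7) = sdig q + 3 := sdig_two_pow_mul_add 4 q (by norm_num : 7 < 2 ^ 4)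
  rw [Pprod_lastThree, genBinom_zero, one_mul]
  convert hy.mul hz using 1
  · congr 1
    · congr 1; push_cast; ring
    · simp only [genBinom, prod_range_succ, prod_range_zero, Nat.factorial]; push_cast; ring
  · push_cast [hs]; ring

lemma hasTwoVal_Pprod_second :
    HasTwoVal (Pprod (N + 3) (48 * q + 22) (lastThree N 0 (16 * q + 6) 5))
      (sdig q - (32 * q + 10)) := by
  have hy := hasTwoVal_genBinom_half_odd (12 * q + 5) (16 * q + 6)
  -- `C_5(-(8q+1)) = -(8q+1)(8q+3)(8q+5)(4q+1)(2q+1) / 15`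
  have hodd : Odd (-((2 * (4 * q) + 1) * (2 * (4 * q + 1) + 1) * (2 * (4 * q + 2) + 1) *
      (2 * (2 * q) + 1) * (2 * q + 1)) : ℤ) :=
    ((((odd_two_mul_add_one _).mul (odd_two_mul_add_one _)).mul (odd_two_mul_add_one _)).mul
      (odd_two_mul_add_one _)).mul (odd_two_mul_add_one _) |>.neg
  have hz := (HasTwoVal.of_odd hodd).div (HasTwoVal.of_odd (by decide : Odd (15 : ℤ)))
  have hs : sdig (16 * q + 6) = sdig q + 2 := sdig_two_pow_mul_add 4 q (by norm_num : 6 < 2 ^ 4)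
  rw [Pprod_lastThree, genBinom_zero, one_mul]
  convert hy.mul hz using 1
  · congr 1
    · congr 1; push_cast; ring
    · simp only [genBinom, prod_range_succ, prod_range_zero, Nat.factorial]; push_cast; ring
  · push_cast [hs]; ring

lemma hasTwoVal_Pprod_third :
    HasTwoVal (Pprod (N + 3) (48 * q + 22) (lastThree N 1 (16 * q + 5) 1))
      (sdig q - (32 * q + 10)) := by
  have hx := (HasTwoVal.of_odd (odd_two_mul_add_one (12 * q + 5 : ℤ))).div (HasTwoVal.two_pow 2)
  have hy := hasTwoVal_genBinom_half_odd (12 * q + 3) (16 * q + 5)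
  have hz := HasTwoVal.of_odd (odd_two_mul_add_one (4 * q + 1 : ℤ)).neg
  have hs : sdig (16 * q + 5) = sdig q + 2 := sdig_two_pow_mul_add 4 q (by norm_num : 5 < 2 ^ 4)
  rw [Pprod_lastThree, genBinom_one, genBinom_one]
  convert (hx.mul hy).mul hz using 1
  · congr 2
    · push_cast; ring
    · congr 1; push_cast; ring
    · push_cast; ring
  · push_cast [hs]; ring

end tuples

theorem stmt16_general (n m q : ℕ) (hn : 3 ≤ n)
    (hq : m = 48 * q + 22)
    (j1 : Fin n → ℕ)
    (hj1 : j1 = fun k : Fin n =>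
      if (k : ℕ) = n - 2 then (m - 1) / 3 else if (k : ℕ) = n - 1 then 2 else 0)
    (j2 : Fin n → ℕ)
    (hj2 : j2 = fun k : Fin n =>
      if (k : ℕ) = n - 2 then (m - 4) / 3 else if (k : ℕ) = n - 1 then 5 else 0)
    (j3 : Fin n → ℕ)
    (hj3 : j3 = fun k : Fin n =>
      if (k : ℕ) = n - 3 then 1
      else if (k : ℕ) = n - 2 then (m - 7) / 3
      else if (k : ℕ) = n - 1 then 1 else 0) :
    inJ n m j1 ∧ inJ n m j2 ∧ inJ n m j3 ∧
      Pprod n m j1 ≠ 0 ∧ Pprod n m j2 ≠ 0 ∧ Pprod n m j3 ≠ 0 ∧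
      V n m j1 = V n m j2 ∧ V n m j2 = V n m j3 ∧
      V n m j3 = (32 * q + 10 : ℤ) - sdig q ∧
      (32 * q + 10 : ℤ) - sdig q =
        ((2 * (m - 1)) / 3 : ℕ) - (sdig ((2 * (m - 1)) / 3) : ℤ) - 1 := by
  obtain ⟨N, rfl⟩ := Nat.exists_eq_add_of_le' hn
  subst hq
  obtain rfl : j1 = lastThree N 0 (16 * q + 7) 2 := by
    rw [hj1]; funext k; simp only [lastThree]; split_ifs <;> omega
  obtain rfl : j2 = lastThree N 0 (16 * q + 6) 5 := by
    rw [hj2]; funext k; simp only [lastThree]; split_ifs <;> omega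
  obtain rfl : j3 = lastThree N 1 (16 * q + 5) 1 := by
    rw [hj3]; funext k; simp only [lastThree]; split_ifs <;> omega
  obtain ⟨hP1, hV1⟩ := hasTwoVal_Pprod_first N q
  obtain ⟨hP2, hV2⟩ := hasTwoVal_Pprod_second N q
  obtain ⟨hP3, hV3⟩ := hasTwoVal_Pprod_third N q
  have hs : sdig (32 * q + 14) = sdig q + 3 := sdig_two_pow_mul_add 5 q (by norm_num : 14 < 2 ^ 5)
  refine ⟨inJ_lastThree.2 (by omega), inJ_lastThree.2 (by omega), inJ_lastThree.2 (by omega),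
    hP1, hP2, hP3, ?_, ?_, ?_, ?_⟩
  · rw [V, V, hV1, hV2]
  · rw [V, V, hV2, hV3]
  · rw [V, hV3]; ring
  · rw [show 2 * (48 * q + 22 - 1) / 3 = 32 * q + 14 by omega, hs]
    push_cast; ring

/-- If `m = 48q + 22`, then `j', j'', j‴ ∈ J`, the products `P(j')`, `P(j'')`,
`P(j‴)` are all nonzero, and
`V(j') = V(j'') = V(j‴) = 32q + 10 - s(q) = (2/3)(m-1) - s((2/3)(m-1)) - 1`. -/
theorem stmt16 (n m q : ℕ) (hn : 3 ≤ n) (hm : 1 ≤ m) (hmn : m ≤ 2 ^ (n + 1) - 3)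
    (hq : m = 48 * q + 22)
    (j1 : Fin n → ℕ)
    (hj1 : j1 = fun k : Fin n =>
      if (k : ℕ) = n - 2 then (m - 1) / 3 else if (k : ℕ) = n - 1 then 2 else 0)
    (j2 : Fin n → ℕ)
    (hj2 : j2 = fun k : Fin n =>
      if (k : ℕ) = n - 2 then (m - 4) / 3 else if (k : ℕ) = n - 1 then 5 else 0)
    (j3 : Fin n → ℕ)
    (hj3 : j3 = fun k : Fin n =>
      if (k : ℕ) = n - 3 then 1
      else if (k : ℕ) = n - 2 then (m - 7) / 3
      else if (k : ℕ) = n - 1 then 1 else 0) :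
    inJ n m j1 ∧ inJ n m j2 ∧ inJ n m j3 ∧
      Pprod n m j1 ≠ 0 ∧ Pprod n m j2 ≠ 0 ∧ Pprod n m j3 ≠ 0 ∧
      V n m j1 = V n m j2 ∧ V n m j2 = V n m j3 ∧
      V n m j3 = (32 * q + 10 : ℤ) - sdig q ∧
      (32 * q + 10 : ℤ) - sdig q =
        ((2 * (m - 1)) / 3 : ℕ) - (sdig ((2 * (m - 1)) / 3) : ℤ) - 1 :=
  stmt16_general n m q hn hq j1 hj1 j2 hj2 j3 hj3
end
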